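/- arXiv:2403.11696 — 2 statements merged into one kernel-verified Lean document; each statement's English description precedes it below -/
import Mathlib

section
/- Fix ν > 1 and κ > 0, and for τ ∈ (0,1) define the symmetrized Hurwitz zeta ζ_τ^{(α)} = ζ(α,τ) + ζ(α,1−τ) and h*(τ) = ζ_τ^{(ν+κ+1)} ζ_τ^{(ν)} / ( ζ_τ^{(κ+1)} ζ_τ^{(2ν)} ) (the N → ∞ limit of the optimal spectral algorithm of the noiseless Circle model). Then for every τ ∈ (0,1): h*(τ) < 1 if κ+1 < ν, h*(τ) = 1 if κ+1 = ν, and h*(τ) > 1 if κ+1 > ν. -/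
noncomputable section

/-- The Hurwitz zeta function `ζ(α,x) = Σ_{n≥0} (n+x)^{-α}` (as a real series). -/
def hurwitzZetaSum (α x : ℝ) : ℝ := ∑' n : ℕ, ((n : ℝ) + x) ^ (-α)

/-- The symmetrized Hurwitz zeta `ζ_τ^{(α)} = ζ(α,τ) + ζ(α,1−τ)`. -/
def symHurwitzZeta (α τ : ℝ) : ℝ := hurwitzZetaSum α τ + hurwitzZetaSum α (1 - τ)

/-! `ζ_τ^{(α)}` is the power sum `Σ c_i^{-α}` over the points `c = (n + τ, n + 1 - τ)`, and any
power sum `Σ c_i^{-α}` over non-constant positive `c` is strictly log-convex in `α`: writing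
`c^{-α} = c^{-δ} · c^{-(α-δ)}`, the inequality `S(α) S(β) < S(δ) S(γ)` for `α + β = γ + δ`,
`δ < α, β` is the weighted Chebyshev sum inequality for the similarly ordered functions
`c^{-(α-δ)}` and `c^{-(β-δ)}` against the weight `c^{-δ}`. The three cases of `h*` are the
three relative positions of `κ + 1` and `ν` in `{ν, ν + κ + 1} ⊂ (κ + 1, 2ν)` or
`{κ + 1, 2ν} ⊂ (ν, ν + κ + 1)`. -/

section PowerSum

variable {ι : Type*}

theorem hasSum_prod_mul_add_mul_swap {a b : ι → ℝ} {A B : ℝ} (ha : HasSum a A) (hb : HasSum b B)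
    (ha0 : 0 ≤ a) (hb0 : 0 ≤ b) :
    HasSum (fun z : ι × ι => a z.1 * b z.2 + b z.1 * a z.2) (2 * (A * B)) := by
  have hab := ha.mul hb (ha.summable.mul_of_nonneg hb.summable ha0 hb0)
  have hba := hb.mul ha (hb.summable.mul_of_nonneg ha.summable hb0 ha0)
  rw [two_mul]
  nth_rewrite 2 [mul_comm A B]
  exact hab.add hba

theorem Monovary.hasSum_mul_lt {w f g : ι → ℝ} {W A B C : ℝ} (hfg : Monovary f g)
    (hw : ∀ i, 0 < w i) (hf : 0 ≤ f) (hg : 0 ≤ g) {i j : ι} (hfij : f i ≠ f j) (hgij : g i ≠ g j)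
    (hW : HasSum w W) (hA : HasSum (fun i => w i * f i) A) (hB : HasSum (fun i => w i * g i) B)
    (hC : HasSum (fun i => w i * f i * g i) C) : A * B < W * C := by
  have hwf : 0 ≤ fun i => w i * f i := fun i => mul_nonneg (hw i).le (hf i)
  have hwg : 0 ≤ fun i => w i * g i := fun i => mul_nonneg (hw i).le (hg i)
  have hwfg : 0 ≤ fun i => w i * f i * g i := fun i => mul_nonneg (hwf i) (hg i)
  have hle : ∀ k l, f k * g l + f l * g k ≤ f k * g k + f l * g l :=
    hfg.mul_add_mul_le_mul_add_mul
  have hlt : f i * g j + f j * g i < f i * g i + f j * g j := by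
    have hpos : 0 < (f i - f j) * (g i - g j) :=
      (hfg.sub_mul_sub_nonneg j i).lt_of_ne
        (mul_ne_zero (sub_ne_zero.2 hfij) (sub_ne_zero.2 hgij)).symm
    linarith
  have key := hasSum_lt (i := (i, j))
    (fun z => by nlinarith [hle z.1 z.2, mul_pos (hw z.1) (hw z.2)])
    (by nlinarith [mul_pos (hw i) (hw j)])
    (hasSum_prod_mul_add_mul_swap hA hB hwf hwg)
    (hasSum_prod_mul_add_mul_swap hW hC (fun i => (hw i).le) hwfg)
  linarith


theorem monovary_rpow_neg {c : ι → ℝ} (hc : ∀ i, 0 < c i) {a b : ℝ} (ha : 0 < a) (hb : 0 < b) :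
    Monovary (fun i => c i ^ (-a)) (fun i => c i ^ (-b)) := fun i j hcb =>
  (Real.rpow_le_rpow_iff_of_neg (hc i) (hc j) (neg_neg_of_pos ha)).2
    ((Real.rpow_lt_rpow_iff_of_neg (hc i) (hc j) (neg_neg_of_pos hb)).1 hcb).le

theorem hasSum_rpow_neg_mul_lt_of_add_eq {c : ι → ℝ} (hc : ∀ i, 0 < c i) {i j : ι}
    (hij : c i ≠ c j) {α β γ δ : ℝ} (hδα : δ < α) (hδβ : δ < β) (hαβ : α + β = γ + δ)
    {Sα Sβ Sγ Sδ : ℝ}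
    (hα : HasSum (fun i => c i ^ (-α)) Sα) (hβ : HasSum (fun i => c i ^ (-β)) Sβ)
    (hγ : HasSum (fun i => c i ^ (-γ)) Sγ) (hδ : HasSum (fun i => c i ^ (-δ)) Sδ) :
    Sα * Sβ < Sδ * Sγ := by
  have hmul : ∀ {a b : ℝ} (k : ι), c k ^ (-a) * c k ^ (-b) = c k ^ (-(a + b)) := fun k => by
    rw [← Real.rpow_add (hc k), neg_add]
  have hne : ∀ {a : ℝ}, 0 < a → c i ^ (-a) ≠ c j ^ (-a) := fun ha h =>
    hij ((Real.rpow_left_inj (hc i).le (hc j).le (neg_ne_zero.2 ha.ne')).1 h)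
  refine (monovary_rpow_neg hc (sub_pos.2 hδα) (sub_pos.2 hδβ)).hasSum_mul_lt
    (fun k => Real.rpow_pos_of_pos (hc k) _) (fun k => (Real.rpow_pos_of_pos (hc k) _).le)
    (fun k => (Real.rpow_pos_of_pos (hc k) _).le) (hne (sub_pos.2 hδα)) (hne (sub_pos.2 hδβ))
    hδ ?_ ?_ ?_
  · simpa only [hmul, add_sub_cancel] using hα
  · simpa only [hmul, add_sub_cancel] using hβ
  · have : δ + (α - δ) + (β - δ) = γ := by linarith
    simpa only [hmul, this] using hγ

end PowerSum

theorem hasSum_hurwitzZetaSum {α x : ℝ} (hα : 1 < α) (hx : 0 < x) :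
    HasSum (fun n : ℕ => ((n : ℝ) + x) ^ (-α)) (hurwitzZetaSum α x) := by
  refine (((Real.summable_one_div_nat_add_rpow x α).2 hα).congr fun n => ?_).hasSum
  rw [abs_of_pos (by positivity), Real.rpow_neg (by positivity), one_div]

/-- The distances `|m - τ|`, `m ∈ ℤ`, listed as `n + τ` and `n + 1 - τ`. -/
def symHurwitzPoints (τ : ℝ) : ℕ ⊕ ℕ → ℝ :=
  Sum.elim (fun n => (n : ℝ) + τ) (fun n => (n : ℝ) + (1 - τ))

section SymHurwitz

variable {τ : ℝ}

theorem symHurwitzPoints_pos (hτ : τ ∈ Set.Ioo (0 : ℝ) 1) (i : ℕ ⊕ ℕ) :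
    0 < symHurwitzPoints τ i := by
  obtain ⟨h0, h1⟩ := hτ
  cases i with
  | inl n => exact add_pos_of_nonneg_of_pos n.cast_nonneg h0
  | inr n => exact add_pos_of_nonneg_of_pos n.cast_nonneg (sub_pos.2 h1)

theorem hasSum_symHurwitzZeta (hτ : τ ∈ Set.Ioo (0 : ℝ) 1) {α : ℝ} (hα : 1 < α) :
    HasSum (fun i => symHurwitzPoints τ i ^ (-α)) (symHurwitzZeta α τ) :=
  HasSum.sum (hasSum_hurwitzZetaSum hα hτ.1) (hasSum_hurwitzZetaSum hα (sub_pos.2 hτ.2))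

theorem symHurwitzZeta_pos (hτ : τ ∈ Set.Ioo (0 : ℝ) 1) {α : ℝ} (hα : 1 < α) :
    0 < symHurwitzZeta α τ := by
  have hpos := fun i => Real.rpow_pos_of_pos (symHurwitzPoints_pos hτ i) (-α)
  rw [← (hasSum_symHurwitzZeta hτ hα).tsum_eq]
  exact (hasSum_symHurwitzZeta hτ hα).summable.tsum_pos (fun i => (hpos i).le) (.inl 0) (hpos _)

theorem symHurwitzZeta_mul_lt_of_add_eq (hτ : τ ∈ Set.Ioo (0 : ℝ) 1) {α β γ δ : ℝ} (hδ : 1 < δ)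
    (hδα : δ < α) (hδβ : δ < β) (hαβ : α + β = γ + δ) :
    symHurwitzZeta α τ * symHurwitzZeta β τ < symHurwitzZeta δ τ * symHurwitzZeta γ τ :=
  hasSum_rpow_neg_mul_lt_of_add_eq (symHurwitzPoints_pos hτ) (i := .inl 0) (j := .inl 1)
    (by simp [symHurwitzPoints]) hδα hδβ hαβ (hasSum_symHurwitzZeta hτ (by linarith))
    (hasSum_symHurwitzZeta hτ (by linarith)) (hasSum_symHurwitzZeta hτ (by linarith))
    (hasSum_symHurwitzZeta hτ hδ)

end SymHurwitz

/-- the overlearning transition for the `N → ∞` optimal algorithm of the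
noiseless Circle model: `h*(τ) = ζ_τ^{(ν+κ+1)} ζ_τ^{(ν)} / (ζ_τ^{(κ+1)} ζ_τ^{(2ν)})`
satisfies `h*(τ) < 1` iff `κ+1 < ν`, `= 1` iff `κ+1 = ν`, `> 1` iff `κ+1 > ν`, for every
`τ ∈ (0,1)`. -/
theorem circle_overlearning_transition (ν κ : ℝ) (hν : 1 < ν) (hκ : 0 < κ) :
    ∀ τ ∈ Set.Ioo (0 : ℝ) 1,
      (κ + 1 < ν →
        symHurwitzZeta (ν + κ + 1) τ * symHurwitzZeta ν τ /
          (symHurwitzZeta (κ + 1) τ * symHurwitzZeta (2 * ν) τ) < 1) ∧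
      (κ + 1 = ν →
        symHurwitzZeta (ν + κ + 1) τ * symHurwitzZeta ν τ /
          (symHurwitzZeta (κ + 1) τ * symHurwitzZeta (2 * ν) τ) = 1) ∧
      (ν < κ + 1 →
        1 < symHurwitzZeta (ν + κ + 1) τ * symHurwitzZeta ν τ /
          (symHurwitzZeta (κ + 1) τ * symHurwitzZeta (2 * ν) τ)) := by
  intro τ hτ
  have hden : 0 < symHurwitzZeta (κ + 1) τ * symHurwitzZeta (2 * ν) τ :=
    mul_pos (symHurwitzZeta_pos hτ (by linarith)) (symHurwitzZeta_pos hτ (by linarith))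
  refine ⟨fun h => ?_, fun h => ?_, fun h => ?_⟩
  · rw [div_lt_one hden, mul_comm]
    exact symHurwitzZeta_mul_lt_of_add_eq hτ (by linarith) h (by linarith) (by ring)
  · subst h
    rw [show κ + 1 + κ + 1 = 2 * (κ + 1) by ring, mul_comm, div_self hden.ne']
  · rw [one_lt_div hden, mul_comm (symHurwitzZeta (ν + κ + 1) τ)]
    exact symHurwitzZeta_mul_lt_of_add_eq hτ hν h (by linarith) (by ring)

end
end

section
/- For every τ ∈ (0,1), the function f(α) = ζ(α,τ) + ζ(α,1−τ) is strictly log-convex on (1,∞): it is twice differentiable and satisfies f(α) f''(α) > (f'(α))² for all α > 1. -/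
/-!
On `(1, ∞)` the function `f(α) = ζ(α,τ) + ζ(α,1-τ)` is the single series `Σ_p p^{-α}` over
the points `p ∈ (ℕ + τ) ⊔ (ℕ + 1 - τ)`, and it may be differentiated termwise:
`f' = Σ (-log p) p^{-α}` and `f'' = Σ (log p)² p^{-α}`. Cauchy–Schwarz for the weights `p^{-α}`
gives `f'² < f f''`, strictly because `log p` is not constant, and `(log f)'' = (f f'' - f'²)/f²`.
-/

noncomputable section

open Real Set Filter Asymptotics

theorem sq_lt_mul_of_hasSum {ι : Type*} {w L : ι → ℝ} {A B C : ℝ} (hw : ∀ i, 0 < w i)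
    (hA : HasSum w A) (hB : HasSum (fun i => L i * w i) B)
    (hC : HasSum (fun i => L i ^ 2 * w i) C) {i j : ι} (hij : L i ≠ L j) :
    B ^ 2 < A * C := by
  have hA_pos : 0 < A := hA.tsum_eq ▸ hA.summable.tsum_pos (fun k => (hw k).le) i (hw i)
  have hdev : HasSum (fun k => w k * (A * L k - B) ^ 2) (A * (A * C - B ^ 2)) := by
    have e : (fun k => w k * (A * L k - B) ^ 2) =
        fun k => A ^ 2 * (L k ^ 2 * w k) - 2 * A * B * (L k * w k) + B ^ 2 * w k := by
      funext k; ring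
    rw [e, show A * (A * C - B ^ 2) = A ^ 2 * C - 2 * A * B * B + B ^ 2 * A by ring]
    exact ((hC.mul_left _).sub (hB.mul_left _)).add (hA.mul_left _)
  obtain ⟨k, hk⟩ : ∃ k, A * L k ≠ B := by
    by_contra! h
    exact hij (mul_left_cancel₀ hA_pos.ne' ((h i).trans (h j).symm))
  have hdev_pos : 0 < A * (A * C - B ^ 2) := by
    have hk' := sub_ne_zero.2 hk
    exact hdev.tsum_eq ▸ hdev.summable.tsum_pos (fun k => by have := hw k; positivity) k
      (by have := hw k; positivity)
  nlinarith

theorem isBigO_log_pow_mul_rpow_neg (m : ℕ) {α s : ℝ} (hs : s < α) :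
    (fun t : ℝ => log t ^ m * t ^ (-α)) =O[atTop] fun t => t ^ (-s) := by
  have h := (isLittleO_log_rpow_rpow_atTop m (sub_pos.2 hs)).isBigO.mul
    (isBigO_refl (fun t : ℝ => t ^ (-α)) atTop)
  refine h.congr' (Eventually.of_forall fun t => by simp only [rpow_natCast]) ?_
  filter_upwards [eventually_gt_atTop 0] with t ht
  rw [← rpow_add ht]; ring_nf

theorem summable_abs_log_pow_mul_rpow_neg (m : ℕ) {x α : ℝ} (hx : 0 < x) (hα : 1 < α) :
    Summable fun n : ℕ => |log (n + x)| ^ m * (n + x) ^ (-α) := by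
  obtain ⟨s, h1s, hsα⟩ := exists_between hα
  have hpos : ∀ n : ℕ, 0 < (n : ℝ) + x := fun n => by positivity
  have hg : Summable fun n : ℕ => ((n : ℝ) + x) ^ (-s) :=
    ((summable_one_div_nat_add_rpow x s).2 h1s).congr fun n => by
      rw [abs_of_pos (hpos n), rpow_neg (hpos n).le, one_div]
  refine summable_of_isBigO_nat hg ?_
  refine (((isBigO_log_pow_mul_rpow_neg m hsα).comp_tendsto
    (tendsto_atTop_add_const_right _ x tendsto_natCast_atTop_atTop)).norm_left).congr_left
    fun n => ?_
  simp [abs_of_pos (rpow_pos_of_pos (hpos n) _)]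

theorem rpow_le_rpow_add_rpow {t a b β : ℝ} (ht : 0 < t) (haβ : a ≤ β) (hβb : β ≤ b) :
    t ^ β ≤ t ^ a + t ^ b := by
  rcases le_total 1 t with h1 | h1
  · linarith [rpow_le_rpow_of_exponent_le h1 hβb, rpow_pos_of_pos ht a]
  · linarith [rpow_le_rpow_of_exponent_ge ht h1 haβ, rpow_pos_of_pos ht b]

theorem hasDerivAt_neg_log_pow_mul_rpow_neg (m : ℕ) {t : ℝ} (ht : 0 < t) (β : ℝ) :
    HasDerivAt (fun γ => (-log t) ^ m * t ^ (-γ)) ((-log t) ^ (m + 1) * t ^ (-β)) β :=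
  (((hasDerivAt_neg β).const_rpow ht).const_mul _).congr_deriv (by ring)

theorem strictConvexOn_log_of_sq_deriv_lt {s : Set ℝ} (hs : IsOpen s) (hconv : Convex ℝ s)
    {f f' f'' : ℝ → ℝ} (hf : ∀ x ∈ s, HasDerivAt f (f' x) x)
    (hf' : ∀ x ∈ s, HasDerivAt f' (f'' x) x) (hpos : ∀ x ∈ s, 0 < f x)
    (hsq : ∀ x ∈ s, f' x ^ 2 < f x * f'' x) :
    StrictConvexOn ℝ s fun x => log (f x) := by
  have hlog : ∀ x ∈ s, HasDerivAt (fun y => log (f y)) (f' x / f x) x :=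
    fun x hx => (hf x hx).log (hpos x hx).ne'
  refine StrictMonoOn.strictConvexOn_of_deriv hconv
    (fun x hx => (hlog x hx).continuousAt.continuousWithinAt) ?_
  rw [hs.interior_eq]
  refine StrictMonoOn.congr ?_ (deriv_eqOn hs fun x hx => (hlog x hx).hasDerivWithinAt).symm
  refine strictMonoOn_of_hasDerivWithinAt_pos hconv
    (fun x hx => ((hf' x hx).div (hf x hx) (hpos x hx).ne').continuousAt.continuousWithinAt)
    (fun x hx => ((hf' x (interior_subset hx)).div (hf x (interior_subset hx))
      (hpos x (interior_subset hx)).ne').hasDerivWithinAt) fun x hx => ?_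
  have := hsq x (interior_subset hx)
  have := hpos x (interior_subset hx)
  exact div_pos (by nlinarith) (by positivity)

def hurwitzZetaSumDeriv (m : ℕ) (α x : ℝ) : ℝ :=
  ∑' n : ℕ, (-log (n + x)) ^ m * ((n : ℝ) + x) ^ (-α)

theorem hurwitzZetaSumDeriv_zero (α x : ℝ) : hurwitzZetaSumDeriv 0 α x = hurwitzZetaSum α x := by
  simp only [hurwitzZetaSumDeriv, hurwitzZetaSum, pow_zero, one_mul]

theorem hasSum_hurwitzZetaSumDeriv (m : ℕ) {x α : ℝ} (hx : 0 < x) (hα : 1 < α) :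
    HasSum (fun n : ℕ => (-log (n + x)) ^ m * ((n : ℝ) + x) ^ (-α))
      (hurwitzZetaSumDeriv m α x) := by
  refine (Summable.of_norm
    ((summable_abs_log_pow_mul_rpow_neg m hx hα).congr fun n => ?_)).hasSum
  have : 0 < (n : ℝ) + x := by positivity
  simp [abs_of_pos (rpow_pos_of_pos this _)]

theorem hurwitzZetaSum_pos {x α : ℝ} (hx : 0 < x) (hα : 1 < α) : 0 < hurwitzZetaSum α x := by
  have h := hasSum_hurwitzZetaSumDeriv 0 hx hα
  simp only [pow_zero, one_mul, hurwitzZetaSumDeriv_zero] at h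
  exact h.tsum_eq ▸ h.summable.tsum_pos (fun n => by positivity) 0 (by positivity)

theorem hasDerivAt_hurwitzZetaSumDeriv (m : ℕ) {x α : ℝ} (hx : 0 < x) (hα : 1 < α) :
    HasDerivAt (fun β => hurwitzZetaSumDeriv m β x) (hurwitzZetaSumDeriv (m + 1) α x) α := by
  obtain ⟨a, ha1, haα⟩ := exists_between hα
  have hpos : ∀ n : ℕ, 0 < (n : ℝ) + x := fun n => by positivity
  have hα_mem : α ∈ Ioo a (α + 1) := ⟨haα, by linarith⟩
  refine (hasSum_hurwitzZetaSumDeriv (m + 1) hx hα).tsum_eq ▸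
    hasDerivAt_tsum_of_isPreconnected
      (u := fun n : ℕ => |log (n + x)| ^ (m + 1) * ((n : ℝ) + x) ^ (-(α + 1)) +
        |log (n + x)| ^ (m + 1) * ((n : ℝ) + x) ^ (-a))
      ((summable_abs_log_pow_mul_rpow_neg (m + 1) hx (by linarith)).add
        (summable_abs_log_pow_mul_rpow_neg (m + 1) hx ha1))
      isOpen_Ioo isPreconnected_Ioo
      (fun n β _ => hasDerivAt_neg_log_pow_mul_rpow_neg m (hpos n) β) (fun n β hβ => ?_)
      hα_mem (hasSum_hurwitzZetaSumDeriv m hx hα).summable hα_mem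
  rw [norm_mul, norm_pow, norm_neg, norm_eq_abs, norm_of_nonneg (rpow_pos_of_pos (hpos n) _).le,
    ← mul_add]
  gcongr
  exact rpow_le_rpow_add_rpow (hpos n) (by linarith [hβ.2]) (by linarith [hβ.1])

theorem sq_hurwitzZetaSumDeriv_one_add_lt {x y α : ℝ} (hx : 0 < x) (hy : 0 < y) (hα : 1 < α) :
    (hurwitzZetaSumDeriv 1 α x + hurwitzZetaSumDeriv 1 α y) ^ 2 <
      (hurwitzZetaSum α x + hurwitzZetaSum α y) *
        (hurwitzZetaSumDeriv 2 α x + hurwitzZetaSumDeriv 2 α y) := by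
  let p : ℕ ⊕ ℕ → ℝ := Sum.elim (fun n => n + x) (fun n => n + y)
  have hmoment (m : ℕ) : HasSum (fun i => (-log (p i)) ^ m * p i ^ (-α))
      (hurwitzZetaSumDeriv m α x + hurwitzZetaSumDeriv m α y) :=
    HasSum.sum (f := fun i => (-log (p i)) ^ m * p i ^ (-α))
      (hasSum_hurwitzZetaSumDeriv m hx hα) (hasSum_hurwitzZetaSumDeriv m hy hα)
  have hp : ∀ i, 0 < p i := by
    rintro (n | n) <;> simp only [p, Sum.elim_inl, Sum.elim_inr] <;> positivity
  refine sq_lt_mul_of_hasSum (L := fun i => -log (p i)) (i := .inl 0) (j := .inl 1)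
    (fun i => rpow_pos_of_pos (hp i) _) ?_ (by simpa only [pow_one] using hmoment 1)
    (hmoment 2) ?_
  · simpa only [pow_zero, one_mul, hurwitzZetaSumDeriv_zero] using hmoment 0
  · simpa [p] using (log_lt_log hx (by linarith : x < 1 + x)).ne

/-- for every `τ ∈ (0,1)`, the function
`f(α) = ζ(α,τ) + ζ(α,1−τ)` is strictly log-convex on `(1,∞)`: it is twice
differentiable there and satisfies `f(α) f''(α) > (f'(α))²` for all `α > 1`. -/
theorem symHurwitzZeta_strictly_log_convex (τ : ℝ) (hτ : τ ∈ Set.Ioo (0 : ℝ) 1) :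
    (∀ α ∈ Set.Ioi (1 : ℝ),
      DifferentiableAt ℝ (fun β => hurwitzZetaSum β τ + hurwitzZetaSum β (1 - τ)) α) ∧
    (∀ α ∈ Set.Ioi (1 : ℝ),
      DifferentiableAt ℝ
        (deriv fun β => hurwitzZetaSum β τ + hurwitzZetaSum β (1 - τ)) α) ∧
    (∀ α ∈ Set.Ioi (1 : ℝ),
      (hurwitzZetaSum α τ + hurwitzZetaSum α (1 - τ)) *
          deriv (deriv fun β => hurwitzZetaSum β τ + hurwitzZetaSum β (1 - τ)) α >
        (deriv (fun β => hurwitzZetaSum β τ + hurwitzZetaSum β (1 - τ)) α) ^ 2) ∧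
    StrictConvexOn ℝ (Set.Ioi (1 : ℝ))
      (fun α => Real.log (hurwitzZetaSum α τ + hurwitzZetaSum α (1 - τ))) := by
  obtain ⟨hτ₀, hτ₁⟩ := hτ
  have hσ₀ : 0 < 1 - τ := sub_pos.2 hτ₁
  set F := fun β => hurwitzZetaSum β τ + hurwitzZetaSum β (1 - τ)
  set D := fun m β => hurwitzZetaSumDeriv m β τ + hurwitzZetaSumDeriv m β (1 - τ)
  have hD (m : ℕ) : ∀ α ∈ Ioi (1 : ℝ), HasDerivAt (D m) (D (m + 1) α) α := fun _ hα =>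
    (hasDerivAt_hurwitzZetaSumDeriv m hτ₀ hα).add (hasDerivAt_hurwitzZetaSumDeriv m hσ₀ hα)
  have hF : ∀ α ∈ Ioi (1 : ℝ), HasDerivAt F (D 1 α) α := fun α hα => by
    simpa only [D, hurwitzZetaSumDeriv_zero] using hD 0 α hα
  have hF' : ∀ α ∈ Ioi (1 : ℝ), HasDerivAt (deriv F) (D 2 α) α := fun α hα =>
    (hD 1 α hα).congr_of_eventuallyEq <| eventually_of_mem (isOpen_Ioi.mem_nhds hα)
      fun β hβ => (hF β hβ).deriv
  have hpos : ∀ α ∈ Ioi (1 : ℝ), 0 < F α := fun α hα =>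
    add_pos (hurwitzZetaSum_pos hτ₀ hα) (hurwitzZetaSum_pos hσ₀ hα)
  have hsq : ∀ α ∈ Ioi (1 : ℝ), D 1 α ^ 2 < F α * D 2 α := fun α hα =>
    sq_hurwitzZetaSumDeriv_one_add_lt hτ₀ hσ₀ hα
  refine ⟨fun α hα => (hF α hα).differentiableAt, fun α hα => (hF' α hα).differentiableAt,
    fun α hα => ?_, strictConvexOn_log_of_sq_deriv_lt isOpen_Ioi (convex_Ioi 1)
      hF (hD 1) hpos hsq⟩
  rw [(hF' α hα).deriv, (hF α hα).deriv]
  exact hsq α hα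

end
end
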